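/- arXiv:2306.00172 — 3 statements merged into one kernel-verified Lean document; each statement's English description precedes it below -/
import Mathlib

section
/- For every ρ ∈ [0,1], every B ≥ 0, every feasible expert strategy x^π, and every sequence of RL suggestions x̃_1, …, x̃_T (each x̃_v ∈ U ∪ {skip}, and whenever x̃_v = u ∈ U the item u has remaining capacity under LOMAR's own counts), the strategy x produced by LOMAR's switching rule satisfies, at every step v ∈ {0, 1, …, T}, the invariant R_v ≥ ρ·( R^π_v + Σ_{u∈U} (|V_{u,v}| − |V^π_{u,v}|)^+ · wmax(u) ) − B. -/
/-!
Induction on `v`. If LOMAR follows the RL suggestion, the switching condition at step `v` is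
literally the invariant at step `v`. If it copies the expert (matching or skipping alike), the
excess term is unchanged and both rewards grow by the same `w ≥ ρ w`. In the remaining case the
expert matches an item `u` that LOMAR has already filled; feasibility of the expert then forces
LOMAR's count of `u` to strictly exceed the expert's, so the excess drops by `wmax u`, which pays
for the expert's gain `w(u, v) ≤ wmax u`.
-/

/-- `cnt x u v` = `|V_{u,v}|`: the number of online items among steps `1, …, v`
that strategy `x` matches to offline item `u`. -/
def cnt {U : Type*} [DecidableEq U] (x : ℕ → Option U) (u : U) (v : ℕ) : ℕ :=
  ((Finset.Icc 1 v).filter fun v' => x v' = some u).card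

/-- `rew w x v` = `R_v`: the cumulative reward of strategy `x` after step `v`
(skipped steps contribute `0`). -/
def rew {U : Type*} (w : U → ℕ → ℝ) (x : ℕ → Option U) (v : ℕ) : ℝ :=
  ∑ v' ∈ Finset.Icc 1 v, ((x v').elim (0 : ℝ) fun u => w u v')

/-- LOMAR's switching condition at step `v` (no free disposal): the RL suggestion
`x̃_v` may be followed iff
`R_{v−1} + w(x̃_v, v) ≥ ρ·(R^π_v + Σ_u (|V_{u,v−1}| − |V^π_{u,v}| + 1{u = x̃_v})⁺ · wmax(u)) − B`. -/
def lomarCond {U : Type*} [Fintype U] [DecidableEq U] (wmax : U → ℝ) (w : U → ℕ → ℝ)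
    (ρ B : ℝ) (xπ x xt : ℕ → Option U) (v : ℕ) : Prop :=
  rew w x (v - 1) + ((xt v).elim (0 : ℝ) fun u => w u v) ≥
    ρ * (rew w xπ v +
      ∑ u : U, max ((cnt x u (v - 1) : ℝ) - (cnt xπ u v : ℝ) +
        (if xt v = some u then (1 : ℝ) else 0)) 0 * wmax u) - B

section

variable {U : Type*} [DecidableEq U]

@[simp]
lemma cnt_zero (x : ℕ → Option U) (u : U) : cnt x u 0 = 0 := by
  simp [cnt]

lemma cnt_succ (x : ℕ → Option U) (u : U) (v : ℕ) :
    cnt x u (v + 1) = cnt x u v + if x (v + 1) = some u then 1 else 0 := by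
  unfold cnt
  rw [← Finset.insert_Icc_right_eq_Icc_add_one (by omega), Finset.filter_insert]
  split
  · rw [Finset.card_insert_of_notMem (by simp)]
  · rfl

lemma cnt_mono (x : ℕ → Option U) (u : U) : Monotone (cnt x u) := fun _ _ h =>
  Finset.card_le_card (Finset.filter_subset_filter _ (Finset.Icc_subset_Icc_right h))

omit [DecidableEq U] in
@[simp]
lemma rew_zero (w : U → ℕ → ℝ) (x : ℕ → Option U) : rew w x 0 = 0 := by
  simp [rew]

omit [DecidableEq U] in
lemma rew_succ (w : U → ℕ → ℝ) (x : ℕ → Option U) (v : ℕ) :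
    rew w x (v + 1) = rew w x v + (x (v + 1)).elim 0 fun u => w u (v + 1) :=
  Finset.sum_Icc_succ_top (by omega) _

variable [Fintype U] (wmax : U → ℝ) (x xπ : ℕ → Option U)

def excess (v : ℕ) : ℝ :=
  ∑ u : U, max ((cnt x u v : ℝ) - cnt xπ u v) 0 * wmax u

variable {wmax x xπ}

lemma excess_succ_of_eq {v : ℕ} (h : x (v + 1) = xπ (v + 1)) :
    excess wmax x xπ (v + 1) = excess wmax x xπ v := by
  refine Finset.sum_congr rfl fun u _ => ?_
  rw [cnt_succ x, cnt_succ xπ, h]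
  push_cast
  ring_nf

lemma excess_succ_of_skip {v : ℕ} {u₀ : U} (hx : x (v + 1) = none)
    (hπ : xπ (v + 1) = some u₀) (hlt : cnt xπ u₀ v < cnt x u₀ v) :
    excess wmax x xπ (v + 1) = excess wmax x xπ v - wmax u₀ := by
  have hterm (u : U) : max ((cnt x u (v + 1) : ℝ) - cnt xπ u (v + 1)) 0 * wmax u =
      max ((cnt x u v : ℝ) - cnt xπ u v) 0 * wmax u - if u = u₀ then wmax u₀ else 0 := by
    have hlt' : (cnt xπ u₀ v : ℝ) + 1 ≤ cnt x u₀ v := by exact_mod_cast hlt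
    rw [cnt_succ x, cnt_succ xπ, hx, hπ]
    by_cases hu : u = u₀
    · subst hu
      simp only [reduceCtorEq, if_true, if_false]
      push_cast
      rw [max_eq_left (by linarith), max_eq_left (by linarith)]
      ring
    · simp [Ne.symm hu, hu]
  rw [excess, Finset.sum_congr rfl fun u _ => hterm u, Finset.sum_sub_distrib,
    Finset.sum_ite_eq']
  simp [excess]

variable {w : U → ℕ → ℝ} {ρ B : ℝ} {xt : ℕ → Option U} {v : ℕ}

lemma invariant_succ_of_lomarCond (hx : x (v + 1) = xt (v + 1))
    (hc : lomarCond wmax w ρ B xπ x xt (v + 1)) :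
    ρ * (rew w xπ (v + 1) + excess wmax x xπ (v + 1)) - B ≤ rew w x (v + 1) := by
  have hexcess : excess wmax x xπ (v + 1) = ∑ u : U, max ((cnt x u v : ℝ) -
      cnt xπ u (v + 1) + if xt (v + 1) = some u then 1 else 0) 0 * wmax u := by
    refine Finset.sum_congr rfl fun u _ => ?_
    rw [cnt_succ x, hx]
    push_cast
    ring_nf
  rw [hexcess, rew_succ w x, hx]
  exact hc

lemma invariant_succ_of_eq (hw₀ : ∀ u v, 0 ≤ w u v) (hρ₁ : ρ ≤ 1)
    (hx : x (v + 1) = xπ (v + 1))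
    (ih : ρ * (rew w xπ v + excess wmax x xπ v) - B ≤ rew w x v) :
    ρ * (rew w xπ (v + 1) + excess wmax x xπ (v + 1)) - B ≤ rew w x (v + 1) := by
  have hgain : ρ * (xπ (v + 1)).elim 0 (fun u => w u (v + 1)) ≤
      (xπ (v + 1)).elim 0 fun u => w u (v + 1) := by
    cases xπ (v + 1) with
    | none => simp
    | some u => exact mul_le_of_le_one_left (hw₀ u (v + 1)) hρ₁
  rw [excess_succ_of_eq hx, rew_succ, rew_succ, hx]
  linarith

lemma invariant_succ_of_skip (hw₁ : ∀ u v, w u v ≤ wmax u) (hρ₀ : 0 ≤ ρ) {u₀ : U}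
    (hx : x (v + 1) = none) (hπ : xπ (v + 1) = some u₀) (hlt : cnt xπ u₀ v < cnt x u₀ v)
    (ih : ρ * (rew w xπ v + excess wmax x xπ v) - B ≤ rew w x v) :
    ρ * (rew w xπ (v + 1) + excess wmax x xπ (v + 1)) - B ≤ rew w x (v + 1) := by
  have hloss : 0 ≤ ρ * (wmax u₀ - w u₀ (v + 1)) := mul_nonneg hρ₀ (by linarith [hw₁ u₀ (v + 1)])
  rw [excess_succ_of_skip hx hπ hlt, rew_succ, rew_succ, hx, hπ]
  simp only [Option.elim]
  linarith

end

theorem lomar_invariant_general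
    {U : Type*} [Fintype U] [DecidableEq U]
    (c : U → ℕ) (wmax : U → ℝ) (T : ℕ) (w : U → ℕ → ℝ)
    (hw₀ : ∀ u v, 0 ≤ w u v) (hw₁ : ∀ u v, w u v ≤ wmax u)
    (ρ B : ℝ) (hρ₀ : 0 ≤ ρ) (hρ₁ : ρ ≤ 1) (hB : 0 ≤ B)
    (xπ : ℕ → Option U) (hπfeas : ∀ u, cnt xπ u T ≤ c u)
    (xt x : ℕ → Option U)
    (hfollow : ∀ v, 1 ≤ v → v ≤ T →
      lomarCond wmax w ρ B xπ x xt v → x v = xt v)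
    (hexpert : ∀ v, 1 ≤ v → v ≤ T → ¬ lomarCond wmax w ρ B xπ x xt v →
      ∀ u, xπ v = some u → cnt x u (v - 1) < c u → x v = some u)
    (hskip : ∀ v, 1 ≤ v → v ≤ T → ¬ lomarCond wmax w ρ B xπ x xt v →
      (xπ v = none ∨ ∃ u, xπ v = some u ∧ ¬ cnt x u (v - 1) < c u) → x v = none) :
    ∀ v ≤ T, rew w x v ≥
      ρ * (rew w xπ v +
        ∑ u : U, max ((cnt x u v : ℝ) - (cnt xπ u v : ℝ)) 0 * wmax u) - B := by
  intro v hv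
  induction v with
  | zero => simpa using hB
  | succ v ih =>
    replace ih := ih (by omega)
    by_cases hc : lomarCond wmax w ρ B xπ x xt (v + 1)
    · exact invariant_succ_of_lomarCond (hfollow _ (by omega) hv hc) hc
    rcases hπ : xπ (v + 1) with _ | u
    · exact invariant_succ_of_eq hw₀ hρ₁ (hπ ▸ hskip _ (by omega) hv hc (.inl hπ)) ih
    by_cases hcap : cnt x u v < c u
    · exact invariant_succ_of_eq hw₀ hρ₁ (hπ ▸ hexpert _ (by omega) hv hc u hπ hcap) ih
    · have hπlt : cnt xπ u v < cnt x u v := by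
        have hstep : cnt xπ u (v + 1) = cnt xπ u v + 1 := by simp [cnt_succ, hπ]
        have := cnt_mono xπ u hv
        have := hπfeas u
        omega
      exact invariant_succ_of_skip hw₁ hρ₀ (hskip _ (by omega) hv hc (.inr ⟨u, hπ, hcap⟩)) hπ
        hπlt ih

/-- **Robustness invariant of LOMAR (no free disposal).**
For every `ρ ∈ [0,1]`, `B ≥ 0`, every feasible expert strategy `x^π`, and every
sequence of RL suggestions `x̃` (which only suggests offline items with remaining
capacity under LOMAR's own counts), the strategy `x` produced by LOMAR's switching
rule satisfies, at every step `v ∈ {0, 1, …, T}`,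
`R_v ≥ ρ·(R^π_v + Σ_u (|V_{u,v}| − |V^π_{u,v}|)⁺ · wmax(u)) − B`. -/
theorem lomar_invariant
    {U : Type*} [Fintype U] [DecidableEq U]
    (c : U → ℕ) (wmax : U → ℝ) (T : ℕ) (w : U → ℕ → ℝ)
    (hw₀ : ∀ u v, 0 ≤ w u v) (hw₁ : ∀ u v, w u v ≤ wmax u)
    (ρ B : ℝ) (hρ₀ : 0 ≤ ρ) (hρ₁ : ρ ≤ 1) (hB : 0 ≤ B)
    (xπ : ℕ → Option U) (hπfeas : ∀ u, cnt xπ u T ≤ c u)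
    (xt x : ℕ → Option U)
    (hxt : ∀ v, 1 ≤ v → v ≤ T → ∀ u, xt v = some u → cnt x u (v - 1) < c u)
    (hfollow : ∀ v, 1 ≤ v → v ≤ T →
      lomarCond wmax w ρ B xπ x xt v → x v = xt v)
    (hexpert : ∀ v, 1 ≤ v → v ≤ T → ¬ lomarCond wmax w ρ B xπ x xt v →
      ∀ u, xπ v = some u → cnt x u (v - 1) < c u → x v = some u)
    (hskip : ∀ v, 1 ≤ v → v ≤ T → ¬ lomarCond wmax w ρ B xπ x xt v →
      (xπ v = none ∨ ∃ u, xπ v = some u ∧ ¬ cnt x u (v - 1) < c u) → x v = none) :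
    ∀ v ≤ T, rew w x v ≥
      ρ * (rew w xπ v +
        ∑ u : U, max ((cnt x u v : ℝ) - (cnt xπ u v : ℝ)) 0 * wmax u) - B :=
  lomar_invariant_general c wmax T w hw₀ hw₁ ρ B hρ₀ hρ₁ hB xπ hπfeas xt x hfollow hexpert hskip
end

section
/- Fix c ≥ 1. For all states a, b of length c (nondecreasing tuples of nonnegative reals) and every w ≥ 0 with w ≥ a_1 and w ≥ b_1: H(ins(a,w), ins(b,w)) − H(a,b) ≤ b_1 − a_1. (Case 2 of the proof of the free-disposal hedging lemma: when the new reward displaces the smallest entry of both lists.) -/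
/-- Free-disposal insertion: given a state `l` (a nondecreasing list of length `c`
of nonnegative reals) and a new reward `w ≥ 0`, `ins l w` is `l` itself if
`w ≤ l₁` (the smallest entry), and otherwise the nondecreasing rearrangement of
`(l₂, …, l_c, w)` (the smallest entry is disposed). -/
noncomputable def ins (l : List ℝ) (w : ℝ) : List ℝ :=
  if w ≤ l.headI then l else l.tail.orderedInsert (· ≤ ·) w

/-- The hedging term for a single offline item of capacity `c`:
`H(a, b) = ( max_{1 ≤ i ≤ c} Σ_{j=1}^{i} (a_j − b_j) )⁺`. -/
noncomputable def hedge (c : ℕ) (a b : List ℝ) : ℝ :=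
  max (sSup ((fun i => ∑ j ∈ Finset.range i, (a.getD j 0 - b.getD j 0)) ''
    Set.Icc 1 c)) 0

/-!
Write `a = a₁ :: a'`, `b = b₁ :: b'`. Since `w ≥ a₁`, `ins a w` is `a'` with `w` inserted in
order, and for a sorted list the `(k+1)`-st prefix sum after inserting `w` is the `k`-th prefix
sum plus `min w a'[k]`, where `a'[k]` is read as `w` past the end of `a'`. Hence every prefix
difference of `(ins a w, ins b w)` is at most the larger of two consecutive prefix differences
of `(a', b')`, and these are prefix differences of `(a, b)` shifted by `b₁ - a₁`. The shifted
bound `H(a, b) + b₁ - a₁` is nonnegative because the first prefix difference of `(a, b)` is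
`a₁ - b₁ ≤ H(a, b)`.
-/

namespace List

theorem sum_range_getD_eq_sum_take {M : Type*} [AddCommMonoid M] (l : List M) (i : ℕ) :
    ∑ j ∈ Finset.range i, l.getD j 0 = (l.take i).sum := by
  induction l generalizing i with
  | nil => simp
  | cons x t ih =>
    cases i with
    | zero => simp
    | succ n =>
      rw [Finset.sum_range_succ']
      simp only [getD_cons_succ, getD_cons_zero, ih, take_succ_cons, sum_cons, add_comm]

section OrderedInsert

variable {α : Type*} [LinearOrder α]

theorem le_getD_of_le_head {x w : α} {l : List α} (hl : (x :: l).Pairwise (· ≤ ·))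
    (hwx : w ≤ x) (k : ℕ) : w ≤ (x :: l).getD k w := by
  rw [getD_eq_getElem?_getD]
  cases hv : (x :: l)[k]? with
  | none => rfl
  | some v =>
    rcases mem_cons.1 (mem_of_getElem? hv) with rfl | hv
    · exact hwx
    · exact hwx.trans ((pairwise_cons.1 hl).1 v hv)

theorem sum_take_succ_orderedInsert [AddCommMonoid α] {l : List α} (hl : l.Pairwise (· ≤ ·))
    (w : α) (k : ℕ) :
    ((l.orderedInsert (· ≤ ·) w).take (k + 1)).sum = (l.take k).sum + min w (l.getD k w) := by
  induction l generalizing k with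
  | nil => simp
  | cons x t ih =>
    by_cases hwx : w ≤ x
    · rw [orderedInsert_cons_of_le _ _ hwx, take_succ_cons, sum_cons,
        min_eq_left (le_getD_of_le_head hl hwx k), add_comm]
    · rw [orderedInsert_cons, if_neg hwx]
      cases k with
      | zero => simp [min_eq_right (le_of_not_ge hwx)]
      | succ k => simp [ih hl.of_cons k, add_assoc]

end OrderedInsert

theorem sum_take_succ_orderedInsert_sub_le {l m : List ℝ} (hl : l.Pairwise (· ≤ ·))
    (hm : m.Pairwise (· ≤ ·)) (hlen : l.length = m.length) (w : ℝ) (k : ℕ) :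
    ((l.orderedInsert (· ≤ ·) w).take (k + 1)).sum - ((m.orderedInsert (· ≤ ·) w).take (k + 1)).sum
      ≤ max ((l.take k).sum - (m.take k).sum) ((l.take (k + 1)).sum - (m.take (k + 1)).sum) := by
  rw [sum_take_succ_orderedInsert hl, sum_take_succ_orderedInsert hm]
  by_cases hk : k < l.length
  · have hk' : k < m.length := hlen ▸ hk
    rw [getD_eq_getElem _ _ hk, getD_eq_getElem _ _ hk', sum_take_succ _ _ hk,
      sum_take_succ _ _ hk']
    rcases le_total w m[k] with hwm | hmw
    · exact le_max_of_le_left (by linarith [min_le_left w l[k], min_eq_left hwm])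
    · exact le_max_of_le_right (by linarith [min_le_right w l[k], min_eq_right hmw])
  · rw [getD_eq_default _ _ (not_lt.1 hk), getD_eq_default _ _ (hlen ▸ not_lt.1 hk)]
    exact le_max_of_le_left (by linarith)

end List

theorem ins_cons_of_le {x w : ℝ} {l : List ℝ} (hl : (x :: l).Pairwise (· ≤ ·)) (hxw : x ≤ w) :
    ins (x :: l) w = l.orderedInsert (· ≤ ·) w := by
  rw [ins, List.headI_cons, List.tail_cons]
  split_ifs with hwx
  · obtain rfl := le_antisymm hwx hxw
    cases l with
    | nil => rfl
    | cons y s => rw [List.orderedInsert_cons_of_le _ _ ((List.pairwise_cons.1 hl).1 y (by simp))]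
  · rfl

theorem hedge_eq_max_sSup_sum_take (c : ℕ) (a b : List ℝ) :
    hedge c a b = max (sSup ((fun i => (a.take i).sum - (b.take i).sum) '' Set.Icc 1 c)) 0 := by
  simp only [hedge, Finset.sum_sub_distrib, List.sum_range_getD_eq_sum_take]

theorem sum_take_sub_sum_take_le_hedge {c : ℕ} {a b : List ℝ} (ha : a.length = c)
    (hb : b.length = c) (i : ℕ) : (a.take i).sum - (b.take i).sum ≤ hedge c a b := by
  rw [List.take_eq_take_min (l := a), List.take_eq_take_min (l := b), ha, hb,
    hedge_eq_max_sSup_sum_take]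
  rcases Nat.eq_zero_or_pos (min i c) with h0 | hpos
  · simp [h0]
  · exact le_max_of_le_left <| le_csSup ((Set.finite_Icc 1 c).image _).bddAbove
      (Set.mem_image_of_mem _ ⟨hpos, min_le_right i c⟩)

theorem hedge_le {c : ℕ} {a b : List ℝ} {M : ℝ}
    (h : ∀ i ∈ Set.Icc 1 c, (a.take i).sum - (b.take i).sum ≤ M) (hM : 0 ≤ M) :
    hedge c a b ≤ M := by
  rw [hedge_eq_max_sSup_sum_take]
  exact max_le (Real.sSup_le (by rintro _ ⟨i, hi, rfl⟩; exact h i hi) hM) hM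

theorem hedging_case2_general (c : ℕ) (hc : 1 ≤ c) (a b : List ℝ)
    (ha_len : a.length = c) (hb_len : b.length = c)
    (ha_sorted : a.Pairwise (· ≤ ·)) (hb_sorted : b.Pairwise (· ≤ ·))
    (w : ℝ) (hwa : a.headI ≤ w) (hwb : b.headI ≤ w) :
    hedge c (ins a w) (ins b w) - hedge c a b ≤ b.headI - a.headI := by
  obtain ⟨x, a', rfl⟩ := List.exists_cons_of_length_pos (by omega : 0 < a.length)
  obtain ⟨y, b', rfl⟩ := List.exists_cons_of_length_pos (by omega : 0 < b.length)
  simp only [List.headI_cons] at hwa hwb ⊢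
  rw [ins_cons_of_le ha_sorted hwa, ins_cons_of_le hb_sorted hwb]
  set H := hedge c (x :: a') (y :: b')
  have hshift (k : ℕ) : (a'.take k).sum - (b'.take k).sum ≤ H + (y - x) := by
    have := sum_take_sub_sum_take_le_hedge ha_len hb_len (k + 1)
    simp only [List.take_succ_cons, List.sum_cons] at this
    linarith
  suffices hedge c (a'.orderedInsert (· ≤ ·) w) (b'.orderedInsert (· ≤ ·) w) ≤ H + (y - x) by
    linarith
  refine hedge_le (fun i hi => ?_) (by simpa using hshift 0)
  obtain ⟨k, rfl⟩ := Nat.exists_eq_add_of_le' hi.1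
  have hlen : a'.length = b'.length := by simp only [List.length_cons] at ha_len hb_len; omega
  exact (List.sum_take_succ_orderedInsert_sub_le ha_sorted.of_cons hb_sorted.of_cons hlen w k).trans
    (max_le (hshift k) (hshift (k + 1)))

/-- **Case 2 of the free-disposal hedging lemma.**
When the new reward `w` displaces the smallest entry of both lists
(`w ≥ a₁` and `w ≥ b₁`):
`H(ins(a,w), ins(b,w)) − H(a,b) ≤ b₁ − a₁`. -/
theorem hedging_case2 (c : ℕ) (hc : 1 ≤ c) (a b : List ℝ)
    (ha_len : a.length = c) (hb_len : b.length = c)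
    (ha_sorted : a.Pairwise (· ≤ ·)) (hb_sorted : b.Pairwise (· ≤ ·))
    (ha_nonneg : ∀ x ∈ a, (0 : ℝ) ≤ x) (hb_nonneg : ∀ x ∈ b, (0 : ℝ) ≤ x)
    (w : ℝ) (hw : 0 ≤ w) (hwa : a.headI ≤ w) (hwb : b.headI ≤ w) :
    hedge c (ins a w) (ins b w) - hedge c a b ≤ b.headI - a.headI :=
  hedging_case2_general c hc a b ha_len hb_len ha_sorted hb_sorted w hwa hwb
end

section
/- Fix c ≥ 1. For all states a, b of length c (nondecreasing tuples of nonnegative reals) and every w ≥ 0 with b_1 ≤ w ≤ a_1: H(a, ins(b,w)) − H(a,b) = b_1 − w. (Case 4 of the proof of the free-disposal hedging lemma: the new reward displaces the smallest entry of the second list but is disposed by the first list; here the change in the hedging term is exactly b_1 − w.) -/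
/-
Write b = b₁ :: t and let k be the number of entries of t below w, so that ins(b, w) is t with
w inserted after its first k entries. Let F and G be the partial sums of a − b and a − ins(b, w).
Then G(i) = F(i) + b₁ − w for i > k, while for i ≤ k the first i entries of ins(b, w) are
b₂, …, b_{i+1}, so G(i) = F(i+1) − a_{i+1} + b₁ ≤ F(i+1) + b₁ − w because a_{i+1} ≥ a₁ ≥ w.
As a_j ≥ w ≥ b_j for j ≤ k + 1, F increases up to k + 1, so its maximum is attained at an index
beyond k; hence max G = max F + b₁ − w. Both maxima are nonnegative, since
max F ≥ F(1) = a₁ − b₁ ≥ 0 and max F + b₁ − w ≥ a₁ − w ≥ 0.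
-/

theorem List.sum_range_getD_eq_sum_take_s9 {M : Type*} [AddCommMonoid M] (l : List M) (i : ℕ) :
    ∑ j ∈ Finset.range i, l.getD j 0 = (l.take i).sum := by
  induction l generalizing i with
  | nil => simp
  | cons x xs ih =>
    cases i with
    | zero => simp
    | succ n =>
      rw [Finset.sum_range_succ', List.take_succ_cons, List.sum_cons, add_comm]
      simp only [List.getD_cons_succ, List.getD_cons_zero, ih]

theorem List.sum_take_append_cons_of_le {M : Type*} [AddCommMonoid M] {l₁ l₂ : List M} {i : ℕ}
    (x : M) (h : i ≤ l₁.length) : ((l₁ ++ x :: l₂).take i).sum = ((l₁ ++ l₂).take i).sum := by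
  rw [List.take_append_of_le_length h, List.take_append_of_le_length h]

theorem List.sum_take_succ_append_cons {M : Type*} [AddCommMonoid M] {l₁ l₂ : List M} {i : ℕ}
    (x : M) (h : l₁.length ≤ i) :
    ((l₁ ++ x :: l₂).take (i + 1)).sum = ((l₁ ++ l₂).take i).sum + x := by
  rw [List.take_append, List.take_append, Nat.sub_add_comm h, List.take_succ_cons]
  simp only [List.sum_append, List.sum_cons]
  rw [List.take_of_length_le (by omega), List.take_of_length_le h]
  abel

theorem List.headI_le_getD {α : Type*} [Preorder α] [Inhabited α] {l : List α}
    (hl : l.Pairwise (· ≤ ·)) {j : ℕ} (hj : j < l.length) (d : α) : l.headI ≤ l.getD j d := by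
  obtain ⟨x, s, rfl⟩ := l.exists_cons_of_ne_nil (List.ne_nil_of_length_pos (by omega))
  rcases j with _ | j
  · exact le_rfl
  · rw [List.headI_cons, List.getD_cons_succ, List.getD_eq_getElem _ _ (by simpa using hj)]
    exact (List.pairwise_cons.1 hl).1 _ (List.getElem_mem _)

noncomputable def gapSum (a b : List ℝ) (i : ℕ) : ℝ :=
  ∑ j ∈ Finset.range i, (a.getD j 0 - b.getD j 0)

theorem gapSum_eq_sum_take_sub (a b : List ℝ) (i : ℕ) :
    gapSum a b i = (a.take i).sum - (b.take i).sum := by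
  rw [gapSum, Finset.sum_sub_distrib, List.sum_range_getD_eq_sum_take_s9,
    List.sum_range_getD_eq_sum_take_s9]

theorem gapSum_le_gapSum {a b : List ℝ} {i n : ℕ} (hab : ∀ j < n, b.getD j 0 ≤ a.getD j 0)
    (hin : i ≤ n) : gapSum a b i ≤ gapSum a b n :=
  Finset.sum_le_sum_of_subset_of_nonneg (Finset.range_mono hin) fun j hj _ =>
    sub_nonneg.2 (hab j (Finset.mem_range.1 hj))

theorem gapSum_append_cons_of_lt (a : List ℝ) {l₁ l₂ : List ℝ} (b₀ x : ℝ) {i : ℕ}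
    (h : l₁.length < i) :
    gapSum a (l₁ ++ x :: l₂) i = gapSum a (b₀ :: (l₁ ++ l₂)) i + (b₀ - x) := by
  obtain ⟨i, rfl⟩ := Nat.exists_eq_add_one_of_ne_zero (by omega : i ≠ 0)
  rw [gapSum_eq_sum_take_sub, gapSum_eq_sum_take_sub,
    List.sum_take_succ_append_cons x (by omega), List.take_succ_cons, List.sum_cons]
  ring

theorem gapSum_append_cons_of_le (a : List ℝ) {l₁ l₂ : List ℝ} (b₀ x : ℝ) {i : ℕ}
    (h : i ≤ l₁.length) :
    gapSum a (l₁ ++ x :: l₂) i = gapSum a (b₀ :: (l₁ ++ l₂)) (i + 1) - a.getD i 0 + b₀ := by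
  rw [gapSum_eq_sum_take_sub, gapSum_eq_sum_take_sub, List.sum_take_append_cons_of_le x h,
    List.take_succ_cons, List.sum_cons, ← List.sum_range_getD_eq_sum_take_s9 a,
    ← List.sum_range_getD_eq_sum_take_s9 a, Finset.sum_range_succ]
  ring

theorem sSup_image_Icc_eq_add {F G : ℕ → ℝ} {k c : ℕ} (d : ℝ) (hkc : k + 1 ≤ c)
    (hF : ∀ i ≤ k, F i ≤ F (k + 1)) (hlow : ∀ i ≤ k, G i ≤ F (i + 1) + d)
    (hhigh : ∀ i, k < i → G i = F i + d) :
    sSup (G '' Set.Icc 1 c) = sSup (F '' Set.Icc 1 c) + d := by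
  have hbdd : ∀ f : ℕ → ℝ, BddAbove (f '' Set.Icc 1 c) := fun f =>
    ((Set.finite_Icc 1 c).image f).bddAbove
  have hne : (Set.Icc 1 c).Nonempty := Set.nonempty_Icc.2 (by omega)
  have hle : ∀ f : ℕ → ℝ, ∀ i ∈ Set.Icc 1 c, f i ≤ sSup (f '' Set.Icc 1 c) := fun f i hi =>
    le_csSup (hbdd f) (Set.mem_image_of_mem f hi)
  apply le_antisymm
  · refine csSup_le (hne.image G) ?_
    rintro _ ⟨i, hi, rfl⟩
    rcases le_or_gt i k with hik | hki
    · grw [hlow i hik, hle F (i + 1) ⟨by omega, by omega⟩]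
    · grw [hhigh i hki, hle F i hi]
  · rw [← le_sub_iff_add_le]
    refine csSup_le (hne.image F) ?_
    rintro _ ⟨i, hi, rfl⟩
    rw [le_sub_iff_add_le]
    rcases le_or_gt i k with hik | hki
    · grw [hF i hik, ← hhigh (k + 1) k.lt_succ_self, hle G (k + 1) ⟨by omega, hkc⟩]
    · grw [← hhigh i hki, hle G i hi]

theorem ins_cons_eq_append_cons {b₀ w : ℝ} (t : List ℝ) (h : b₀ < w) :
    ∃ l₁ l₂, (∀ y ∈ l₁, y < w) ∧ t = l₁ ++ l₂ ∧ ins (b₀ :: t) w = l₁ ++ w :: l₂ := by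
  refine ⟨t.takeWhile (fun y => ¬ w ≤ y), t.dropWhile (fun y => ¬ w ≤ y), fun y hy => ?_,
    List.takeWhile_append_dropWhile.symm, ?_⟩
  · simpa using List.mem_takeWhile_imp hy
  · rw [ins, if_neg (by simpa using h.not_ge)]
    exact List.orderedInsert_eq_take_drop (r := (· ≤ ·)) w t

theorem gapSum_one (a b : List ℝ) : gapSum a b 1 = a.headI - b.headI := by
  cases a <;> cases b <;> simp [gapSum, show (default : ℝ) = 0 from rfl]

theorem hedge_eq (c : ℕ) (a b : List ℝ) :
    hedge c a b = max (sSup (gapSum a b '' Set.Icc 1 c)) 0 := rfl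

theorem sSup_gapSum_ins {c : ℕ} (hc : 1 ≤ c) {a b : List ℝ} (ha_len : a.length = c)
    (hb_len : b.length = c) (ha_sorted : a.Pairwise (· ≤ ·)) {w : ℝ} (hwb : b.headI < w)
    (hwa : w ≤ a.headI) :
    sSup (gapSum a (ins b w) '' Set.Icc 1 c) =
      sSup (gapSum a b '' Set.Icc 1 c) + (b.headI - w) := by
  obtain ⟨b₀, t, rfl⟩ := b.exists_cons_of_ne_nil (List.ne_nil_of_length_pos (by omega))
  rw [List.headI_cons] at hwb ⊢
  obtain ⟨l₁, l₂, hl₁, rfl, hins⟩ := ins_cons_eq_append_cons t hwb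
  have ha_ge : ∀ j < c, w ≤ a.getD j 0 := fun j hj =>
    hwa.trans (List.headI_le_getD ha_sorted (by omega) 0)
  have hb_le : ∀ j ≤ l₁.length, (b₀ :: (l₁ ++ l₂)).getD j 0 ≤ w := by
    rintro (_ | j) hj
    · exact hwb.le
    · rw [List.getD_cons_succ, List.getD_append _ _ _ _ (by omega),
        List.getD_eq_getElem _ _ (by omega)]
      exact (hl₁ _ (List.getElem_mem _)).le
  simp only [List.length_cons, List.length_append] at hb_len
  rw [hins]
  refine sSup_image_Icc_eq_add (k := l₁.length) _ (by omega)
    (fun i hi => gapSum_le_gapSum (fun j hj => (hb_le j (by omega)).trans (ha_ge j (by omega)))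
      (by omega))
    (fun i hi => ?_) (fun i hi => gapSum_append_cons_of_lt a b₀ w hi)
  rw [gapSum_append_cons_of_le a b₀ w hi]
  linarith [ha_ge i (by omega)]

theorem hedging_case4_general (c : ℕ) (hc : 1 ≤ c) (a b : List ℝ)
    (ha_len : a.length = c) (hb_len : b.length = c)
    (ha_sorted : a.Pairwise (· ≤ ·))
    (w : ℝ) (hwb : b.headI ≤ w) (hwa : w ≤ a.headI) :
    hedge c a (ins b w) - hedge c a b = b.headI - w := by
  rcases hwb.eq_or_lt with heq | hlt
  · rw [ins, if_pos heq.ge, sub_self, heq, sub_self]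
  have hS : a.headI - b.headI ≤ sSup (gapSum a b '' Set.Icc 1 c) :=
    gapSum_one a b ▸ le_csSup ((Set.finite_Icc 1 c).image _).bddAbove ⟨1, ⟨le_rfl, hc⟩, rfl⟩
  rw [hedge_eq, hedge_eq, sSup_gapSum_ins hc ha_len hb_len ha_sorted hlt hwa,
    max_eq_left (by linarith), max_eq_left (by linarith)]
  ring

/-- **Case 4 of the free-disposal hedging lemma.**
When the new reward `w` displaces the smallest entry of the second list but is
disposed by the first list (`b₁ ≤ w ≤ a₁`), the change in the hedging term is exactly
`b₁ − w`: `H(a, ins(b,w)) − H(a,b) = b₁ − w`. -/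
theorem hedging_case4 (c : ℕ) (hc : 1 ≤ c) (a b : List ℝ)
    (ha_len : a.length = c) (hb_len : b.length = c)
    (ha_sorted : a.Pairwise (· ≤ ·)) (hb_sorted : b.Pairwise (· ≤ ·))
    (ha_nonneg : ∀ x ∈ a, (0 : ℝ) ≤ x) (hb_nonneg : ∀ x ∈ b, (0 : ℝ) ≤ x)
    (w : ℝ) (hw : 0 ≤ w) (hwb : b.headI ≤ w) (hwa : w ≤ a.headI) :
    hedge c a (ins b w) - hedge c a b = b.headI - w :=
  hedging_case4_general c hc a b ha_len hb_len ha_sorted w hwb hwa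
end
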